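/- arXiv:2101.00444 — 2 statements merged into one kernel-verified Lean document; each statement's English description precedes it below -/
import Mathlib

section
/- For pairwise distinct real numbers λ_1, …, λ_n, the basic separable potential of level n satisfies V_r^{(n)} := ∑_{i=1}^n (∂ρ_r/∂λ_i) λ_i^n / Δ_i = ρ_r for every r = 1, …, n, where ρ_r = (-1)^r σ_r(λ) and Δ_i = ∏_{k≠i}(λ_i - λ_k). -/
/-- The `i`-th elementary symmetric polynomial `σ_i(λ₁,…,λ_n)`. -/
noncomputable def esymmF (n i : ℕ) (l : Fin n → ℝ) : ℝ :=
  ∑ s ∈ Finset.powersetCard i Finset.univ, ∏ j ∈ s, l j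

/-- `ρ_i = (-1)^i σ_i(λ)`. -/
noncomputable def rho (n i : ℕ) (l : Fin n → ℝ) : ℝ :=
  (-1) ^ i * esymmF n i l

/-- Partial derivative `∂f/∂λ_j` evaluated at `l`. -/
noncomputable def pd (n : ℕ) (f : (Fin n → ℝ) → ℝ) (l : Fin n → ℝ) (j : Fin n) : ℝ :=
  deriv (fun t => f (Function.update l j t)) (l j)

/-- `Δ_j = ∏_{k≠j} (λ_j - λ_k)`. -/
noncomputable def Delta (n : ℕ) (l : Fin n → ℝ) (j : Fin n) : ℝ :=
  ∏ k ∈ Finset.univ.erase j, (l j - l k)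

open Finset Polynomial

lemma esymmF_update (n m : ℕ) (l : Fin n → ℝ) (i : Fin n) (t : ℝ) :
    esymmF n (m + 1) (Function.update l i t)
      = (∑ s ∈ Finset.powersetCard (m + 1) (Finset.univ.erase i), ∏ j ∈ s, l j)
        + (∑ s ∈ Finset.powersetCard m (Finset.univ.erase i), ∏ j ∈ s, l j) * t := by
  classical
  unfold esymmF
  have huniv : (Finset.univ : Finset (Fin n)) = insert i (Finset.univ.erase i) :=
    (Finset.insert_erase (Finset.mem_univ i)).symm
  conv_lhs => rw [huniv]
  rw [Finset.powersetCard_succ_insert (Finset.notMem_erase i _), Finset.sum_union ?disj]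
  case disj =>
    rw [Finset.disjoint_left]
    intro s hs hs'
    obtain ⟨s', hs', rfl⟩ := Finset.mem_image.mp hs'
    exact (Finset.notMem_erase i _)
      ((Finset.mem_powersetCard.mp hs).1 (Finset.mem_insert_self i s'))
  congr 1
  · refine Finset.sum_congr rfl fun s hs => Finset.prod_congr rfl fun j hj => ?_
    have hji : j ≠ i := Finset.ne_of_mem_erase ((Finset.mem_powersetCard.mp hs).1 hj)
    simp [Function.update_of_ne hji]
  · rw [Finset.sum_image ?inj, Finset.sum_mul]
    case inj =>
      intro s hs u hu h
      have his : i ∉ s := fun h' =>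
        (Finset.notMem_erase i _) ((Finset.mem_powersetCard.mp hs).1 h')
      have hiu : i ∉ u := fun h' =>
        (Finset.notMem_erase i _) ((Finset.mem_powersetCard.mp hu).1 h')
      rw [← Finset.erase_insert his, ← Finset.erase_insert hiu, h]
    refine Finset.sum_congr rfl fun s hs => ?_
    have his : i ∉ s := fun h' =>
      (Finset.notMem_erase i _) ((Finset.mem_powersetCard.mp hs).1 h')
    rw [Finset.prod_insert his, Function.update_self, mul_comm]
    congr 1
    refine Finset.prod_congr rfl fun j hj => ?_
    have hji : j ≠ i := fun h => his (h ▸ hj)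
    simp [Function.update_of_ne hji]

lemma pd_rho (n m : ℕ) (l : Fin n → ℝ) (i : Fin n) :
    pd n (rho n (m + 1)) l i
      = (-1) ^ (m + 1) * ∑ s ∈ Finset.powersetCard m (Finset.univ.erase i), ∏ j ∈ s, l j := by
  classical
  unfold pd rho
  set A : ℝ := ∑ s ∈ Finset.powersetCard (m + 1) (Finset.univ.erase i), ∏ j ∈ s, l j
  set B : ℝ := ∑ s ∈ Finset.powersetCard m (Finset.univ.erase i), ∏ j ∈ s, l j
  have hfun : (fun t => (-1 : ℝ) ^ (m + 1) * esymmF n (m + 1) (Function.update l i t))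
      = fun t => (-1 : ℝ) ^ (m + 1) * (A + B * t) := by
    funext t; rw [esymmF_update]
  rw [hfun]
  have h : HasDerivAt (fun t : ℝ => (-1 : ℝ) ^ (m + 1) * (A + B * t))
      ((-1 : ℝ) ^ (m + 1) * B) (l i) := by
    have := (((hasDerivAt_id (l i)).const_mul B).const_add A).const_mul ((-1 : ℝ) ^ (m + 1))
    simpa using this
  exact h.deriv

theorem basic_potential_level_n (n : ℕ) (l : Fin n → ℝ) (hl : Function.Injective l)
    (r : Fin n) :
    ∑ i, pd n (rho n ((r : ℕ) + 1)) l i * l i ^ n / Delta n l i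
      = rho n ((r : ℕ) + 1) l := by
  classical
  set m : ℕ := (r : ℕ) + 1 with hmdef
  have hm1 : 1 ≤ m := Nat.le_add_left 1 _
  have hmn : m ≤ n := r.2
  set P : Polynomial ℝ := ∏ k : Fin n, (X - C (l k)) with hP
  have hmonic : P.Monic := monic_prod_of_monic _ _ fun k _ => monic_X_sub_C _
  have hnat : P.natDegree = n := by
    rw [hP, natDegree_prod_of_monic _ _ fun k _ => monic_X_sub_C _]
    simp
  have hPdeg : P.degree = (n : WithBot ℕ) := by
    rw [degree_eq_natDegree hmonic.ne_zero, hnat]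
  have hdeg : (X ^ n - P).degree < ((Finset.univ : Finset (Fin n)).card : WithBot ℕ) := by
    rw [Finset.card_univ, Fintype.card_fin]
    calc (X ^ n - P).degree < (X ^ n : Polynomial ℝ).degree := by
          refine degree_sub_lt ?_ (pow_ne_zero n X_ne_zero) ?_
          · rw [degree_X_pow, hPdeg]
          · rw [leadingCoeff_X_pow, hmonic.leadingCoeff]
      _ = (n : WithBot ℕ) := degree_X_pow n
  have hrep := Lagrange.eq_interpolate (s := Finset.univ) (v := l) hl.injOn hdeg
  -- evaluate the values
  have heval : ∀ i : Fin n, (X ^ n - P).eval (l i) = l i ^ n := by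
    intro i
    have hPz : P.eval (l i) = 0 := by
      rw [hP, eval_prod]
      exact Finset.prod_eq_zero (Finset.mem_univ i) (by simp)
    simp [hPz]
  have hco := congrArg (fun q : Polynomial ℝ => q.coeff (n - m)) hrep
  simp only [Lagrange.interpolate_apply, finset_sum_coeff, coeff_C_mul] at hco
  -- LHS coefficient
  have hXco : (X ^ n : Polynomial ℝ).coeff (n - m) = 0 := by
    rw [coeff_X_pow, if_neg (by omega)]
  have hPco : P.coeff (n - m) = (-1) ^ m * esymmF n m l := by
    have hcard : Multiset.card ((Finset.univ : Finset (Fin n)).val.map l) = n := by simp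
    have : P = (((Finset.univ : Finset (Fin n)).val.map l).map fun t => X - C t).prod := by
      rw [hP, Finset.prod, Multiset.map_map]; rfl
    rw [this, Multiset.prod_X_sub_C_coeff _ (by rw [hcard]; omega), hcard,
      Nat.sub_sub_self hmn, Finset.esymm_map_val]
    rfl
  -- basis coefficients
  have hbasis : ∀ i : Fin n, (Lagrange.basis Finset.univ l i).coeff (n - m)
      = (Delta n l i)⁻¹ * ((-1) ^ (m - 1)
          * ∑ s ∈ Finset.powersetCard (m - 1) (Finset.univ.erase i), ∏ j ∈ s, l j) := by
    intro i
    have hb : Lagrange.basis Finset.univ l i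
        = C ((Delta n l i)⁻¹) * ∏ j ∈ Finset.univ.erase i, (X - C (l j)) := by
      unfold Lagrange.basis Lagrange.basisDivisor
      rw [Finset.prod_mul_distrib, ← map_prod, Finset.prod_inv_distrib]
      rfl
    have hcard : Multiset.card (((Finset.univ : Finset (Fin n)).erase i).val.map l) = n - 1 := by
      simp [Finset.card_erase_of_mem]
    have hprodco : (∏ j ∈ Finset.univ.erase i, (X - C (l j))).coeff (n - m)
        = (-1) ^ (m - 1)
          * ∑ s ∈ Finset.powersetCard (m - 1) (Finset.univ.erase i), ∏ j ∈ s, l j := by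
      have h2 : (∏ j ∈ Finset.univ.erase i, (X - C (l j)))
          = ((((Finset.univ : Finset (Fin n)).erase i).val.map l).map fun t => X - C t).prod := by
        rw [Finset.prod, Multiset.map_map]; rfl
      have h3 : n - 1 - (n - m) = m - 1 := by omega
      rw [h2, Multiset.prod_X_sub_C_coeff _ (by rw [hcard]; omega), hcard, h3,
        Finset.esymm_map_val]
    rw [hb, coeff_C_mul, hprodco]
  simp only [heval, hXco, hbasis, coeff_sub] at hco
  -- now pure algebra
  have hsum : ∀ i : Fin n, pd n (rho n m) l i * l i ^ n / Delta n l i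
      = -(l i ^ n * ((Delta n l i)⁻¹ * ((-1) ^ (m - 1)
          * ∑ s ∈ Finset.powersetCard (m - 1) (Finset.univ.erase i), ∏ j ∈ s, l j))) := by
    intro i
    have hm' : m - 1 = (r : ℕ) := by omega
    rw [hmdef, pd_rho n (r : ℕ) l i, hm', div_eq_mul_inv, pow_succ]
    ring
  rw [Finset.sum_congr rfl fun i _ => hsum i, Finset.sum_neg_distrib, ← hco, hPco, rho]
  ring
end

section
/- Let λ_1, …, λ_n be pairwise distinct reals and for m ∈ {0, 1, …, n} let G_m = diag(λ_1^m/Δ_1, …, λ_n^m/Δ_n) with Δ_i = ∏_{k≠i}(λ_i − λ_k). Then in Viète coordinates q_i = (-1)^i σ_i(λ), the transformed metric G_m(q) = J_V G_m J_V^T has entries G_m^{ij}(q) = q_{i+j+m-n-1} if i,j ≤ n-m; G_m^{ij}(q) = -q_{i+j+m-n-1} if i,j ≥ n-m+1; and 0 otherwise (conventions: q_0 = 1, q_k = 0 for k < 0 or k > n). -/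
/-- Viète coordinate `q_k` extended to integer indices, with the conventions
`q_0 = 1` and `q_k = 0` for `k < 0` or `k > n`. -/
noncomputable def qZ (n : ℕ) (l : Fin n → ℝ) (k : ℤ) : ℝ :=
  if 0 ≤ k ∧ k ≤ (n : ℤ) then rho n k.toNat l else 0

open Finset Polynomial

/-- elementary symmetric polynomial of the variables omitting `k` -/
noncomputable def EE (n : ℕ) (l : Fin n → ℝ) (k : Fin n) (i : ℕ) : ℝ :=
  ∑ s ∈ Finset.powersetCard i (Finset.univ.erase k), ∏ r ∈ s, l r

lemma EE_zero (n : ℕ) (l : Fin n → ℝ) (k : Fin n) : EE n l k 0 = 1 := by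
  simp [EE]

lemma esymmF_zero (n : ℕ) (l : Fin n → ℝ) : esymmF n 0 l = 1 := by
  simp [esymmF]

lemma rho_zero (n : ℕ) (l : Fin n → ℝ) : rho n 0 l = 1 := by
  simp [rho, esymmF_zero]

lemma esymmF_update_s11 (n : ℕ) (l : Fin n → ℝ) (k : Fin n) (a : ℕ) (t : ℝ) :
    esymmF n (a+1) (Function.update l k t) = EE n l k (a+1) + t * EE n l k a := by
  unfold esymmF EE
  have hk : (univ : Finset (Fin n)) = insert k (univ.erase k) :=
    (Finset.insert_erase (mem_univ k)).symm
  conv_lhs => rw [hk]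
  rw [Finset.powersetCard_succ_insert (Finset.notMem_erase k _)]
  have hdisj : Disjoint (Finset.powersetCard (a+1) (univ.erase k))
      ((Finset.powersetCard a (univ.erase k)).image (insert k)) := by
    rw [Finset.disjoint_left]
    intro s hs hs'
    rw [Finset.mem_powersetCard] at hs
    rw [Finset.mem_image] at hs'
    obtain ⟨u, hu, rfl⟩ := hs'
    exact (Finset.notMem_erase k univ) (hs.1 (Finset.mem_insert_self k u))
  rw [Finset.sum_union hdisj]
  congr 1
  · apply Finset.sum_congr rfl
    intro s hs
    apply Finset.prod_congr rfl
    intro r hr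
    rw [Finset.mem_powersetCard] at hs
    exact Function.update_of_ne (Finset.ne_of_mem_erase (hs.1 hr)) t l
  · rw [Finset.sum_image]
    · rw [Finset.mul_sum]
      apply Finset.sum_congr rfl
      intro s hs
      rw [Finset.mem_powersetCard] at hs
      have hks : k ∉ s := fun h => (Finset.notMem_erase k univ) (hs.1 h)
      rw [Finset.prod_insert hks, Function.update_self]
      congr 1
      apply Finset.prod_congr rfl
      intro r hr
      exact Function.update_of_ne (Finset.ne_of_mem_erase (hs.1 hr)) t l
    · intro s hs u hu h
      rw [Finset.mem_coe, Finset.mem_powersetCard] at hs hu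
      have hks : k ∉ s := fun hh => (Finset.notMem_erase k univ) (hs.1 hh)
      have hku : k ∉ u := fun hh => (Finset.notMem_erase k univ) (hu.1 hh)
      rw [← Finset.erase_insert hks, h, Finset.erase_insert hku]

lemma esymmF_succ (n : ℕ) (l : Fin n → ℝ) (k : Fin n) (a : ℕ) :
    esymmF n (a+1) l = EE n l k (a+1) + l k * EE n l k a := by
  have := esymmF_update_s11 n l k a (l k)
  rwa [Function.update_eq_self] at this

lemma pd_rho_s11 (n : ℕ) (l : Fin n → ℝ) (k : Fin n) (a : ℕ) :
    pd n (rho n (a+1)) l k = (-1:ℝ)^(a+1) * EE n l k a := by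
  unfold pd
  have h : (fun t => rho n (a+1) (Function.update l k t))
      = fun t => (-1:ℝ)^(a+1) * (EE n l k (a+1) + t * EE n l k a) := by
    funext t
    rw [rho, esymmF_update_s11]
  rw [h]
  have hd : HasDerivAt (fun t : ℝ => (-1:ℝ)^(a+1) * (EE n l k (a+1) + t * EE n l k a))
      ((-1:ℝ)^(a+1) * (1 * EE n l k a)) (l k) :=
    (((hasDerivAt_id (l k)).mul_const _).const_add _).const_mul _
  rw [hd.deriv, one_mul]

lemma cc_expand (n : ℕ) (l : Fin n → ℝ) (k : Fin n) :
    ∀ i : ℕ, (-1:ℝ)^i * EE n l k i = ∑ s ∈ range (i+1), rho n s l * l k ^ (i - s)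
  | 0 => by simp [EE_zero, rho_zero]
  | (i+1) => by
    have IH := cc_expand n l k i
    have h1 : rho n (i+1) l = (-1:ℝ)^(i+1) * (EE n l k (i+1) + l k * EE n l k i) := by
      rw [rho, esymmF_succ n l k]
    rw [Finset.sum_range_succ]
    have h2 : ∀ s ∈ range (i+1), rho n s l * l k ^ (i+1-s) = l k * (rho n s l * l k ^ (i - s)) := by
      intro s hs
      rw [mem_range] at hs
      rw [show i+1-s = (i-s)+1 by omega, pow_succ]
      ring
    rw [Finset.sum_congr rfl h2, ← Finset.mul_sum, ← IH, h1]
    simp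
    ring

lemma rho_coeff (n : ℕ) (l : Fin n → ℝ) (a : ℕ) (ha : a ≤ n) :
    (∏ k : Fin n, (X - C (l k))).coeff (n - a) = rho n a l := by
  have hcard : Multiset.card ((univ : Finset (Fin n)).val.map l) = n := by simp
  have hmm : (∏ k : Fin n, (X - C (l k)))
      = (((univ : Finset (Fin n)).val.map l).map (fun t : ℝ => X - C t)).prod := by
    rw [Multiset.map_map]
    rfl
  rw [hmm, Multiset.prod_X_sub_C_coeff _ (by rw [hcard]; omega), hcard,
    show n - (n - a) = a by omega, Finset.esymm_map_val, rho]
  rfl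

lemma natDegree_P (n : ℕ) (l : Fin n → ℝ) :
    (∏ k : Fin n, (X - C (l k))).natDegree = n := by
  rw [Polynomial.natDegree_prod _ _ (fun k _ => X_sub_C_ne_zero (l k))]
  simp

lemma sum_rho_pow (n : ℕ) (l : Fin n → ℝ) (x : ℝ) :
    ∑ a ∈ range (n+1), rho n a l * x ^ (n - a) = ∏ k : Fin n, (x - l k) := by
  have h1 : ∑ a ∈ range (n+1), rho n a l * x ^ (n - a)
      = ∑ a ∈ range (n+1), (∏ k : Fin n, (X - C (l k))).coeff (n - a) * x ^ (n - a) := by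
    apply Finset.sum_congr rfl
    intro a ha
    rw [mem_range] at ha
    rw [rho_coeff n l a (by omega)]
  have h2 := Finset.sum_range_reflect
    (fun b => (∏ k : Fin n, (X - C (l k))).coeff b * x ^ b) (n+1)
  simp only [Nat.add_sub_cancel] at h2
  rw [h1, h2]
  have h3 := Polynomial.eval_eq_sum_range (p := ∏ k : Fin n, (X - C (l k))) x
  rw [natDegree_P] at h3
  rw [← h3]
  simp [Polynomial.eval_prod]

lemma sum_rho_root (n : ℕ) (l : Fin n → ℝ) (k : Fin n) :
    ∑ a ∈ range (n+1), rho n a l * (l k) ^ (n - a) = 0 := by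
  rw [sum_rho_pow]
  exact Finset.prod_eq_zero (mem_univ k) (sub_self _)

lemma lagrange_sum (n : ℕ) (l : Fin n → ℝ) (hl : Function.Injective l) (p : ℕ) (hp : p < n) :
    ∑ k : Fin n, l k ^ p / Delta n l k = if p = n - 1 then 1 else 0 := by
  classical
  have hvs : Set.InjOn l (univ : Finset (Fin n)) := fun a _ b _ h => hl h
  have hdeg : (X ^ p : ℝ[X]).degree < (#(univ : Finset (Fin n)) : ℕ) := by
    rw [Polynomial.degree_X_pow, Finset.card_univ, Fintype.card_fin]
    exact_mod_cast hp
  have heq := Lagrange.eq_interpolate hvs hdeg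
  have hc := congrArg (fun q : ℝ[X] => q.coeff (n - 1)) heq
  simp only [Lagrange.interpolate_apply, Polynomial.finset_sum_coeff,
    Polynomial.coeff_C_mul, Polynomial.coeff_X_pow] at hc
  have hb : ∀ k : Fin n, (Lagrange.basis univ l k).coeff (n-1) = (Delta n l k)⁻¹ := by
    intro k
    have hb1 : (Lagrange.basis univ l k).natDegree = n - 1 := by
      rw [Lagrange.natDegree_basis hvs (mem_univ k), Finset.card_univ, Fintype.card_fin]
    rw [← hb1, ← Polynomial.leadingCoeff, Lagrange.basis, Polynomial.leadingCoeff_prod]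
    rw [Delta, ← Finset.prod_inv_distrib]
    apply Finset.prod_congr rfl
    intro r hr
    rw [Lagrange.basisDivisor, Polynomial.leadingCoeff_mul, Polynomial.leadingCoeff_C,
      (Polynomial.monic_X_sub_C (l r)).leadingCoeff, mul_one]
  simp only [hb] at hc
  rw [show ∑ k : Fin n, l k ^ p / Delta n l k
      = ∑ k : Fin n, Polynomial.eval (l k) (X ^ p : ℝ[X]) * (Delta n l k)⁻¹ by
    apply Finset.sum_congr rfl; intro k _; rw [Polynomial.eval_pow, Polynomial.eval_X,
      div_eq_mul_inv]]
  rw [← hc]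
  by_cases hpe : p = n - 1
  · rw [if_pos (by omega), if_pos hpe]
  · rw [if_neg (by omega), if_neg hpe]

/-- Lagrange power sums extended to integer exponents. -/
noncomputable def SZ (n : ℕ) (l : Fin n → ℝ) (p : ℤ) : ℝ :=
  if 0 ≤ p then ∑ k : Fin n, l k ^ p.toNat / Delta n l k else 0

lemma SZ_small (n : ℕ) (l : Fin n → ℝ) (hl : Function.Injective l) (hn : 1 ≤ n)
    (p : ℤ) (hp : p ≤ (n:ℤ) - 1) :
    SZ n l p = if p = (n:ℤ) - 1 then 1 else 0 := by
  unfold SZ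
  by_cases h0 : 0 ≤ p
  · rw [if_pos h0, lagrange_sum n l hl p.toNat (by omega)]
    exact if_congr (by omega) rfl rfl
  · rw [if_neg h0, if_neg (by omega)]

lemma SZ_big (n : ℕ) (l : Fin n → ℝ) (p : ℤ) (hp : (n:ℤ) ≤ p) :
    ∑ a ∈ range (n+1), rho n a l * SZ n l (p - a) = 0 := by
  have h1 : ∀ a ∈ range (n+1), rho n a l * SZ n l (p - a)
      = ∑ k : Fin n, rho n a l * (l k ^ (p - n).toNat * l k ^ (n - a)) / Delta n l k := by
    intro a ha
    rw [mem_range] at ha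
    rw [SZ, if_pos (by omega), Finset.mul_sum]
    apply Finset.sum_congr rfl
    intro k _
    rw [show (p - a).toNat = (p - n).toNat + (n - a) by omega, pow_add]
    ring
  rw [Finset.sum_congr rfl h1, Finset.sum_comm]
  apply Finset.sum_eq_zero
  intro k _
  have h2 : ∑ a ∈ range (n+1), rho n a l * (l k ^ (p-n).toNat * l k ^ (n-a)) / Delta n l k
      = (l k ^ (p-n).toNat / Delta n l k) * ∑ a ∈ range (n+1), rho n a l * l k ^ (n-a) := by
    rw [Finset.mul_sum]
    apply Finset.sum_congr rfl
    intro a _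
    ring
  rw [h2, sum_rho_root, mul_zero]

lemma UU (n : ℕ) (l : Fin n → ℝ) (hl : Function.Injective l) (hn : 1 ≤ n) (p : ℤ) :
    ∑ a ∈ range (n+1), rho n a l * SZ n l (p - a) = if p = (n:ℤ) - 1 then 1 else 0 := by
  by_cases hp : (n:ℤ) ≤ p
  · rw [SZ_big n l p hp, if_neg (by omega)]
  · push_neg at hp
    have h1 : ∀ a ∈ range (n+1), rho n a l * SZ n l (p - a)
        = rho n a l * (if p - a = (n:ℤ)-1 then 1 else 0) := by
      intro a ha
      rw [SZ_small n l hl hn _ (by omega)]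
    rw [Finset.sum_congr rfl h1]
    by_cases hpe : p = (n:ℤ) - 1
    · rw [if_pos hpe, Finset.sum_eq_single_of_mem 0 (mem_range.mpr (by omega))]
      · rw [if_pos (by omega), mul_one, rho_zero]
      · intro b hb hb0
        rw [mem_range] at hb
        rw [if_neg (by omega), mul_zero]
    · rw [if_neg hpe]
      apply Finset.sum_eq_zero
      intro a ha
      rw [mem_range] at ha
      rw [if_neg (by omega), mul_zero]

lemma sum_ite_rho (n : ℕ) (l : Fin n → ℝ) (lo hi : ℕ) (K : ℤ) :
    ∑ a ∈ Finset.Ico lo hi, rho n a l * (if (a:ℤ) = K then 1 else 0)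
      = if (lo:ℤ) ≤ K ∧ K < (hi:ℤ) then rho n K.toNat l else 0 := by
  by_cases h : (lo:ℤ) ≤ K ∧ K < (hi:ℤ)
  · rw [if_pos h, Finset.sum_eq_single_of_mem K.toNat (by rw [mem_Ico]; omega)]
    · rw [if_pos (by omega), mul_one]
    · intro b hb hbne
      rw [mem_Ico] at hb
      rw [if_neg (by omega), mul_zero]
  · rw [if_neg h]
    apply Finset.sum_eq_zero
    intro a ha
    rw [mem_Ico] at ha
    rw [if_neg (by omega), mul_zero]

theorem metric_Gm_in_viete (n : ℕ) (l : Fin n → ℝ) (hl : Function.Injective l)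
    (m : ℕ) (hm : m ≤ n)
    (JV : Matrix (Fin n) (Fin n) ℝ)
    (hJV : ∀ i j, JV i j = pd n (rho n ((i : ℕ) + 1)) l j) :
    JV * Matrix.diagonal (fun i => l i ^ m / Delta n l i) * JV.transpose =
      Matrix.of (fun i j : Fin n =>
        if (i : ℕ) + 1 ≤ n - m ∧ (j : ℕ) + 1 ≤ n - m then
          qZ n l (((i : ℕ) : ℤ) + ((j : ℕ) : ℤ) + (m : ℤ) + 1 - (n : ℤ))
        else if n - m + 1 ≤ (i : ℕ) + 1 ∧ n - m + 1 ≤ (j : ℕ) + 1 then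
          -qZ n l (((i : ℕ) : ℤ) + ((j : ℕ) : ℤ) + (m : ℤ) + 1 - (n : ℤ))
        else 0) := by
  rcases Nat.eq_zero_or_pos n with hn0 | hn
  · subst hn0
    ext i j
    exact i.elim0
  ext i j
  simp only [Matrix.of_apply]
  have hi' : (i:ℕ) < n := i.isLt
  have hj' : (j:ℕ) < n := j.isLt
  set M : ℤ := ((i:ℕ):ℤ) + ((j:ℕ):ℤ) + (m:ℤ) with hM
  set K : ℤ := M + 1 - (n:ℤ) with hK
  have hL : (JV * Matrix.diagonal (fun i => l i ^ m / Delta n l i) * JV.transpose) i j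
      = ∑ k : Fin n, JV i k * (l k ^ m / Delta n l k) * JV j k := by
    rw [Matrix.mul_apply]
    apply Finset.sum_congr rfl
    intro k _
    rw [Matrix.mul_diagonal, Matrix.transpose_apply]
  have hterm : ∀ k : Fin n, JV i k * (l k ^ m / Delta n l k) * JV j k
      = ∑ a ∈ range ((i:ℕ)+1), ∑ b ∈ range ((j:ℕ)+1),
          rho n a l * rho n b l * (l k ^ ((i:ℕ)-a+((j:ℕ)-b)+m) / Delta n l k) := by
    intro k
    have e3 : JV i k * JV j k
        = ((-1:ℝ)^(i:ℕ) * EE n l k i) * ((-1:ℝ)^(j:ℕ) * EE n l k j) := by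
      rw [hJV i k, hJV j k, pd_rho_s11, pd_rho_s11]
      ring
    have e4 : JV i k * (l k ^ m / Delta n l k) * JV j k
        = ((∑ a ∈ range ((i:ℕ)+1), rho n a l * l k ^ ((i:ℕ) - a))
            * (∑ b ∈ range ((j:ℕ)+1), rho n b l * l k ^ ((j:ℕ) - b)))
            * (l k ^ m / Delta n l k) := by
      rw [← cc_expand, ← cc_expand, ← e3]
      ring
    rw [e4, Finset.sum_mul_sum, Finset.sum_mul]
    apply Finset.sum_congr rfl
    intro a ha
    rw [Finset.sum_mul]
    apply Finset.sum_congr rfl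
    intro b hb
    rw [pow_add, pow_add]
    ring
  have hmain : ∑ k : Fin n, JV i k * (l k ^ m / Delta n l k) * JV j k
      = ∑ a ∈ range ((i:ℕ)+1), ∑ b ∈ range ((j:ℕ)+1),
          rho n a l * rho n b l * SZ n l (M - a - b) := by
    rw [Finset.sum_congr rfl (fun k _ => hterm k), Finset.sum_comm]
    apply Finset.sum_congr rfl
    intro a ha
    rw [Finset.sum_comm]
    apply Finset.sum_congr rfl
    intro b hb
    rw [mem_range] at ha hb
    have hSZ : SZ n l (M - a - b) = ∑ k : Fin n, l k ^ ((i:ℕ)-a+((j:ℕ)-b)+m) / Delta n l k := by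
      rw [SZ, if_pos (by omega), show (M - a - b).toNat = (i:ℕ)-a+((j:ℕ)-b)+m by omega]
    rw [hSZ, Finset.mul_sum]
  have hsplit : ∀ (c : ℕ), c ≤ n+1 → ∀ G : ℕ → ℝ,
      ∑ a ∈ range (n+1), G a = ∑ a ∈ range c, G a + ∑ a ∈ Finset.Ico c (n+1), G a := by
    intro c hc G
    simp only [range_eq_Ico]
    exact (Finset.sum_Ico_consecutive G (Nat.zero_le c) hc).symm
  have hrowfull : ∀ (s : Finset ℕ),
      ∑ a ∈ s, ∑ b ∈ range (n+1), rho n a l * rho n b l * SZ n l (M - a - b)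
        = ∑ a ∈ s, rho n a l * (if (a:ℤ) = K then 1 else 0) := by
    intro s
    apply Finset.sum_congr rfl
    intro a _
    have h1 : ∀ b ∈ range (n+1), rho n a l * rho n b l * SZ n l (M - a - b)
        = rho n a l * (rho n b l * SZ n l ((M - a) - b)) := by
      intro b _
      rw [mul_assoc]
    rw [Finset.sum_congr rfl h1, ← Finset.mul_sum, UU n l hl hn (M - a)]
    congr 1
    exact if_congr (by omega) rfl rfl
  have hcolfull : ∀ (s : Finset ℕ),
      ∑ a ∈ range (n+1), ∑ b ∈ s, rho n a l * rho n b l * SZ n l (M - a - b)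
        = ∑ b ∈ s, rho n b l * (if (b:ℤ) = K then 1 else 0) := by
    intro s
    rw [Finset.sum_comm]
    apply Finset.sum_congr rfl
    intro b _
    have h1 : ∀ a ∈ range (n+1), rho n a l * rho n b l * SZ n l (M - a - b)
        = rho n b l * (rho n a l * SZ n l ((M - b) - a)) := by
      intro a _
      have h2 : M - (a:ℤ) - (b:ℤ) = (M - b) - a := by ring
      rw [h2]
      ring
    rw [Finset.sum_congr rfl h1, ← Finset.mul_sum, UU n l hl hn (M - b)]
    congr 1
    exact if_congr (by omega) rfl rfl
  have hA4 : ∑ a ∈ Finset.Ico ((i:ℕ)+1) (n+1), ∑ b ∈ Finset.Ico ((j:ℕ)+1) (n+1),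
      rho n a l * rho n b l * SZ n l (M - a - b) = 0 := by
    apply Finset.sum_eq_zero
    intro a ha
    apply Finset.sum_eq_zero
    intro b hb
    rw [mem_Ico] at ha hb
    rw [SZ_small n l hl hn _ (by omega), if_neg (by omega), mul_zero]
  have hfin : ∑ a ∈ range ((i:ℕ)+1), ∑ b ∈ range ((j:ℕ)+1),
        rho n a l * rho n b l * SZ n l (M - a - b)
      = (if 0 ≤ K ∧ K ≤ ((i:ℕ):ℤ) then rho n K.toNat l else 0)
        - (if ((j:ℕ):ℤ) + 1 ≤ K ∧ K ≤ (n:ℤ) then rho n K.toNat l else 0) := by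
    have e1 : ∀ a ∈ range ((i:ℕ)+1),
        (∑ b ∈ range ((j:ℕ)+1), rho n a l * rho n b l * SZ n l (M - a - b))
        = (∑ b ∈ range (n+1), rho n a l * rho n b l * SZ n l (M - a - b))
          - (∑ b ∈ Finset.Ico ((j:ℕ)+1) (n+1),
              rho n a l * rho n b l * SZ n l (M - a - b)) := by
      intro a _
      rw [hsplit ((j:ℕ)+1) (by omega) (fun b => rho n a l * rho n b l * SZ n l (M - a - b))]
      ring
    rw [Finset.sum_congr rfl e1, Finset.sum_sub_distrib]
    congr 1
    · rw [hrowfull (range ((i:ℕ)+1)), range_eq_Ico, sum_ite_rho]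
      exact if_congr (by push_cast; omega) rfl rfl
    · have e2 : ∑ a ∈ range ((i:ℕ)+1), ∑ b ∈ Finset.Ico ((j:ℕ)+1) (n+1),
            rho n a l * rho n b l * SZ n l (M - a - b)
          = (∑ a ∈ range (n+1), ∑ b ∈ Finset.Ico ((j:ℕ)+1) (n+1),
              rho n a l * rho n b l * SZ n l (M - a - b))
            - (∑ a ∈ Finset.Ico ((i:ℕ)+1) (n+1), ∑ b ∈ Finset.Ico ((j:ℕ)+1) (n+1),
              rho n a l * rho n b l * SZ n l (M - a - b)) := by
        rw [hsplit ((i:ℕ)+1) (by omega)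
          (fun a => ∑ b ∈ Finset.Ico ((j:ℕ)+1) (n+1),
            rho n a l * rho n b l * SZ n l (M - a - b))]
        ring
      rw [e2, hA4, sub_zero, hcolfull, sum_ite_rho]
      exact if_congr (by push_cast; omega) rfl rfl
  rw [hL, hmain, hfin]
  simp only [qZ]
  split_ifs <;> first | (exfalso; omega) | ring1
end
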